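/- arXiv:2309.15396 — 2 statements merged into one kernel-verified Lean document; each statement's English description precedes it below -/
import Mathlib

section
/- For any complex polynomials P_N of degree at most D converging pointwise on ℂ to a nonzero polynomial P, and for every ε > 0 and every root λ of P of multiplicity m, there exists N₀ such that for all N ≥ N₀ the polynomial P_N has exactly m roots (counted with multiplicity) in the open disk of radius ε centered at λ, provided ε is smaller than the distance from λ to the other roots of P. -/
/-!
Pointwise convergence of polynomials of degree at most `D` forces convergence of their
coefficients (Lagrange interpolation at `D + 1` nodes), hence locally uniform convergence of
`Q N` and of `(Q N)'`. The limit `P` has no zeros on the circle `|z - λ| = ε`, so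
`(Q N)' / Q N → P' / P` uniformly there, and the circle integrals of these logarithmic
derivatives, which by the argument principle are `2πi` times the numbers of zeros inside the
circle, converge. Being integers, the zero counts are eventually equal, and inside the circle
`P` only vanishes at `λ`.
-/

open Filter Topology Polynomial Metric Set

theorem IsCompact.tendstoUniformlyOn_of_tendsto {ι α β E : Type*} [TopologicalSpace α]
    [TopologicalSpace β] [UniformSpace E] {f : α → β → E} {k : Set β} (hk : IsCompact k)
    (hf : Continuous f.uncurry) {l : Filter ι} {a : ι → α} {q : α} (ha : Tendsto a l (𝓝 q)) :
    TendstoUniformlyOn (fun i => f (a i)) (f q) l k := by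
  intro u hu
  obtain ⟨v, hv, hvu⟩ :=
    hk.mem_uniformity_of_prod hf.continuousOn (mem_univ q) (symm_le_uniformity hu)
  rw [nhdsWithin_univ] at hv
  filter_upwards [ha hv] with i hi x hx using hvu _ hi x hx

section UniformComposition

variable {ι α β γ : Type*} [PseudoMetricSpace β] {l : Filter ι} {F : ι → α → β} {f : α → β}
  {t : Set α} {K U : Set β}

theorem TendstoUniformlyOn.eventually_mapsTo_of_isCompact (h : TendstoUniformlyOn F f l t)
    (hK : IsCompact K) (hfK : MapsTo f t K) (hU : IsOpen U) (hKU : K ⊆ U) :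
    ∀ᶠ i in l, MapsTo (F i) t U := by
  obtain ⟨δ, hδ, hδU⟩ := hK.exists_thickening_subset_open hU hKU
  filter_upwards [Metric.tendstoUniformlyOn_iff.1 h δ hδ] with i hi x hx
  exact hδU (mem_thickening_iff.2 ⟨f x, hfK hx, by rw [dist_comm]; exact hi x hx⟩)

theorem TendstoUniformlyOn.comp_continuousOn_of_isCompact [ProperSpace β] [UniformSpace γ]
    {g : β → γ} (h : TendstoUniformlyOn F f l t) (hK : IsCompact K) (hfK : MapsTo f t K)
    (hU : IsOpen U) (hKU : K ⊆ U) (hg : ContinuousOn g U) :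
    TendstoUniformlyOn (fun i x => g (F i x)) (fun x => g (f x)) l t := by
  obtain ⟨δ, hδ, hδU⟩ := hK.exists_cthickening_subset_open hU hKU
  have hg' : UniformContinuousOn g (cthickening δ K) :=
    (hK.cthickening).uniformContinuousOn_of_continuous (hg.mono hδU)
  have hF :=
    h.eventually_mapsTo_of_isCompact hK hfK isOpen_thickening (self_subset_thickening hδ K)
  exact hg'.comp_tendstoUniformlyOn_eventually
    (hF.mono fun i hi x hx => thickening_subset_cthickening δ K (hi hx))
    (fun x hx => self_subset_cthickening K (hfK hx)) h

end UniformComposition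

namespace Polynomial

section Convergence

variable {ι : Type*} {l : Filter ι} {D : ℕ}

theorem tendstoUniformlyOn_eval_of_tendsto_coeff {R : Type*} [CommSemiring R] [UniformSpace R]
    [IsTopologicalSemiring R] {q : ι → R[X]} {p : R[X]} (hq : ∀ i, (q i).natDegree ≤ D)
    (hp : p.natDegree ≤ D) (hc : ∀ j, Tendsto (fun i => (q i).coeff j) l (𝓝 (p.coeff j)))
    {K : Set R} (hK : IsCompact K) :
    TendstoUniformlyOn (fun i z => (q i).eval z) (fun z => p.eval z) l K := by
  have hsum : ∀ r : R[X], r.natDegree ≤ D →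
      (fun z => r.eval z) = fun z => ∑ j ∈ Finset.range (D + 1), r.coeff j * z ^ j :=
    fun r hr => _root_.funext fun z => eval_eq_sum_range' (Nat.lt_succ_of_le hr) z
  rw [show (fun i z => (q i).eval z) = _ from _root_.funext fun i => hsum _ (hq i), hsum p hp]
  exact hK.tendstoUniformlyOn_of_tendsto
    (f := fun (a : ℕ → R) z => ∑ j ∈ Finset.range (D + 1), a j * z ^ j) (by fun_prop)
    (tendsto_pi_nhds.2 hc)

theorem tendstoUniformlyOn_derivative_div_of_tendsto_coeff {𝕜 : Type*} [NormedField 𝕜]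
    [ProperSpace 𝕜] {q : ι → 𝕜[X]} {p : 𝕜[X]} (hq : ∀ i, (q i).natDegree ≤ D)
    (hp : p.natDegree ≤ D) (hc : ∀ j, Tendsto (fun i => (q i).coeff j) l (𝓝 (p.coeff j)))
    {K : Set 𝕜} (hK : IsCompact K) (hpK : ∀ z ∈ K, p.eval z ≠ 0) :
    TendstoUniformlyOn (fun i z => (q i).derivative.eval z / (q i).eval z)
      (fun z => p.derivative.eval z / p.eval z) l K := by
  have hder := tendstoUniformlyOn_eval_of_tendsto_coeff
    (fun i => (natDegree_derivative_le (q i)).trans ((Nat.sub_le _ 1).trans (hq i)))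
    ((natDegree_derivative_le p).trans ((Nat.sub_le _ 1).trans hp))
    (fun j => by simpa only [coeff_derivative] using (hc (j + 1)).mul_const _) hK
  have hval := tendstoUniformlyOn_eval_of_tendsto_coeff hq hp hc hK
  have hpair : TendstoUniformlyOn (fun i z => ((q i).derivative.eval z, (q i).eval z))
      (fun z => (p.derivative.eval z, p.eval z)) l K :=
    fun u hu => ((hder.prodMk hval) u hu).diag_of_prod
  exact hpair.comp_continuousOn_of_isCompact (g := fun w => w.1 / w.2)
    (hK.image (by fun_prop)) (mapsTo_image _ _) (isOpen_ne_fun continuous_snd continuous_const)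
    (by rintro _ ⟨z, hz, rfl⟩; exact hpK z hz)
    (continuousOn_fst.div continuousOn_snd fun _ h => h)

theorem exists_tendsto_coeff_of_tendsto_eval {𝕜 : Type*} [Field 𝕜] [CharZero 𝕜]
    [TopologicalSpace 𝕜] [IsTopologicalRing 𝕜] {q : ι → 𝕜[X]} (hq : ∀ i, (q i).natDegree ≤ D)
    {f : 𝕜 → 𝕜} (hf : ∀ z, Tendsto (fun i => (q i).eval z) l (𝓝 (f z))) :
    ∃ p : 𝕜[X], p.natDegree ≤ D ∧ ∀ j, Tendsto (fun i => (q i).coeff j) l (𝓝 (p.coeff j)) := by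
  set s := Finset.range (D + 1)
  have hs : Set.InjOn (Nat.cast : ℕ → 𝕜) s := Nat.cast_injective.injOn
  have hcoeff : ∀ (r : ℕ → 𝕜) j, (Lagrange.interpolate s Nat.cast r).coeff j
      = ∑ k ∈ s, r k * (Lagrange.basis s Nat.cast k).coeff j := fun r j => by
    simp only [Lagrange.interpolate_apply, finsetSum_coeff, coeff_C_mul]
  refine ⟨Lagrange.interpolate s Nat.cast fun k => f k, ?_, fun j => ?_⟩
  · have := Lagrange.degree_interpolate_lt (fun k : ℕ => f k) hs
    rw [Finset.card_range] at this
    exact natDegree_le_of_degree_le (Order.le_of_lt_succ this)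
  · have hq' : ∀ i, q i = Lagrange.interpolate s Nat.cast fun k => (q i).eval (k : 𝕜) :=
      fun i => Lagrange.eq_interpolate hs
        (by rw [Finset.card_range]
            exact (degree_le_of_natDegree_le (hq i)).trans_lt (WithBot.coe_lt_coe.2 D.lt_succ_self))
    simp only [fun i => congrArg (coeff · j) (hq' i), hcoeff]
    exact tendsto_finsetSum _ fun k _ => (hf k).mul_const _

end Convergence

end Polynomial

open Complex in
theorem circleIntegral.integral_sub_inv_of_lt_dist {c w : ℂ} {R : ℝ} (hR : 0 ≤ R)
    (hw : R < dist w c) : (∮ z in C(c, R), (z - w)⁻¹) = 0 := by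
  have hne : ∀ z ∈ closedBall c R, z - w ≠ 0 := fun z hz h =>
    (mem_closedBall.1 hz).not_gt (sub_eq_zero.1 h ▸ hw)
  exact circleIntegral_eq_zero_of_differentiable_on_off_countable hR countable_empty
    (continuousOn_id.sub continuousOn_const |>.inv₀ hne)
    fun z hz => (differentiableAt_id.sub_const w).inv (hne z (ball_subset_closedBall hz.1))

open Real Complex in
theorem circleIntegral_multiset_sum_one_div_sub {c : ℂ} {R : ℝ} (hR : 0 < R) (S : Multiset ℂ)
    (hS : ∀ s ∈ S, dist s c ≠ R) :
    (∮ z in C(c, R), (S.map fun s => 1 / (z - s)).sum)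
      = 2 * π * I * (S.filter (dist · c < R)).card := by
  have hcont : ∀ s, dist s c ≠ R → ContinuousOn (fun z : ℂ => 1 / (z - s)) (sphere c R) :=
    fun s hs => continuousOn_const.div (continuousOn_id.sub continuousOn_const)
      fun z hz h => hs (sub_eq_zero.1 h ▸ mem_sphere.1 hz)
  induction S using Multiset.induction_on with
  | empty => simp [circleIntegral]
  | cons s S ih =>
    have hs := hS s (Multiset.mem_cons_self s S)
    have hS' : ∀ t ∈ S, dist t c ≠ R := fun t ht => hS t (Multiset.mem_cons_of_mem ht)
    simp only [Multiset.map_cons, Multiset.sum_cons]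
    rw [circleIntegral.integral_add ((hcont s hs).circleIntegrable hR.le)
      ((continuousOn_multiset_sum S fun t ht => hcont t (hS' t ht)).circleIntegrable hR.le),
      ih hS']
    simp only [one_div]
    rcases lt_or_gt_of_ne hs with hlt | hgt
    · rw [circleIntegral.integral_sub_inv_of_mem_ball (mem_ball.2 hlt),
        Multiset.filter_cons_of_pos (p := (dist · c < R)) S hlt, Multiset.card_cons]
      push_cast; ring
    · rw [circleIntegral.integral_sub_inv_of_lt_dist hR.le hgt,
        Multiset.filter_cons_of_neg (p := (dist · c < R)) S hgt.not_gt, zero_add]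

namespace Polynomial

open Real Complex in
theorem circleIntegral_derivative_div_eval {p : ℂ[X]} {c : ℂ} {R : ℝ} (hR : 0 < R)
    (hp : ∀ z ∈ sphere c R, p.eval z ≠ 0) :
    (∮ z in C(c, R), p.derivative.eval z / p.eval z)
      = 2 * π * I * (p.roots.filter (dist · c < R)).card := by
  rw [circleIntegral.integral_congr hR.le
    fun z hz => (IsAlgClosed.splits p).eval_derivative_div_eval_of_ne_zero (hp z hz)]
  exact circleIntegral_multiset_sum_one_div_sub hR _
    fun s hs hsR => hp s (mem_sphere.2 hsR) (isRoot_of_mem_roots hs)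

theorem card_roots_filter_dist_lt_eq_rootMultiplicity {R : Type*} [CommRing R] [IsDomain R]
    [DecidableEq R] [PseudoMetricSpace R] {p : R[X]} {c : R} {ε : ℝ} (hε : 0 < ε)
    (hsep : ∀ z, p.IsRoot z → z ≠ c → ε < dist c z) :
    (p.roots.filter (dist · c < ε)).card = p.rootMultiplicity c := by
  have : p.roots.filter (dist · c < ε) = p.roots.filter (· = c) :=
    Multiset.filter_congr fun z hz => ⟨fun hlt => by_contra fun hne =>
      (hsep z (isRoot_of_mem_roots hz) hne).not_gt (dist_comm c z ▸ hlt), by rintro rfl; simpa⟩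
  rw [this, Multiset.filter_eq', Multiset.card_replicate, count_roots]

end Polynomial

theorem Complex.eventually_eq_of_tendsto_natCast {ι : Type*} {l : Filter ι} {k : ι → ℕ} {m : ℕ}
    (h : Tendsto (fun i => (k i : ℂ)) l (𝓝 m)) : ∀ᶠ i in l, k i = m := by
  have hiso : Isometry ((↑) : ℕ → ℂ) := Isometry.of_dist_eq fun a b => by
    rw [← Complex.ofReal_natCast, ← Complex.ofReal_natCast, Complex.isometry_ofReal.dist_eq,
      Nat.dist_cast_real]
  simpa [nhds_discrete] using hiso.isEmbedding.tendsto_nhds_iff.2 h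

open scoped Classical in
theorem stmt_9_general (D : ℕ) (P : Polynomial ℂ) (Q : ℕ → Polynomial ℂ)
    (hdeg : ∀ N, (Q N).natDegree ≤ D)
    (hconv : ∀ z : ℂ, Tendsto (fun N => (Q N).eval z) atTop (𝓝 (P.eval z)))
    (lam0 : ℂ) (ε : ℝ) (hε : 0 < ε)
    (hsep : ∀ z : ℂ, P.IsRoot z → z ≠ lam0 → ε < dist lam0 z) :
    ∃ N₀ : ℕ, ∀ N, N₀ ≤ N →
      (Multiset.filter (fun z => dist z lam0 < ε) (Q N).roots).card
        = P.rootMultiplicity lam0 := by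
  obtain ⟨R, hRdeg, hcoeff⟩ := exists_tendsto_coeff_of_tendsto_eval hdeg hconv
  obtain rfl : P = R := Polynomial.funext fun z => tendsto_nhds_unique (hconv z)
    ((tendstoUniformlyOn_eval_of_tendsto_coeff hdeg hRdeg hcoeff isCompact_singleton).tendsto_at
      rfl)
  have hP : ∀ z ∈ sphere lam0 ε, P.eval z ≠ 0 := fun z hz h0 =>
    (hsep z h0 (ne_of_mem_sphere hz hε.ne')).ne (by rw [dist_comm, mem_sphere.1 hz])
  have hQ : ∀ᶠ N in atTop, ∀ z ∈ sphere lam0 ε, (Q N).eval z ≠ 0 :=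
    (tendstoUniformlyOn_eval_of_tendsto_coeff hdeg hRdeg hcoeff
      (isCompact_sphere lam0 ε)).eventually_mapsTo_of_isCompact
      ((isCompact_sphere lam0 ε).image P.continuous) (mapsTo_image _ _) isOpen_ne
      (by rintro _ ⟨z, hz, rfl⟩; exact hP z hz)
  have hint := (tendstoUniformlyOn_derivative_div_of_tendsto_coeff hdeg hRdeg hcoeff
    (isCompact_sphere lam0 ε) hP).tendsto_circleIntegral_of_continuousOn hε.le
    (hQ.mono fun N hN => (Q N).derivative.continuous.continuousOn.div
      (Q N).continuous.continuousOn hN)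
  rw [circleIntegral_derivative_div_eval hε hP] at hint
  have hcount : Tendsto (fun N => (((Q N).roots.filter (dist · lam0 < ε)).card : ℂ)) atTop
      (𝓝 (P.rootMultiplicity lam0)) := by
    rw [← card_roots_filter_dist_lt_eq_rootMultiplicity hε hsep]
    have := (hint.congr' (hQ.mono fun N hN => circleIntegral_derivative_div_eval hε hN)).const_mul
      (2 * Real.pi * Complex.I)⁻¹
    simpa only [inv_mul_cancel_left₀ Complex.two_pi_I_ne_zero] using this
  exact eventually_atTop.1 (Complex.eventually_eq_of_tendsto_natCast hcount)

open scoped Classical in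
/-- Local root counting: if polynomials `Q N` of degree at most `D` converge pointwise on
`ℂ` to a nonzero polynomial `P`, and `lam0` is a root of `P` of multiplicity `m`, then for
any `ε > 0` smaller than the distance from `lam0` to the other roots of `P`, eventually
`Q N` has exactly `m` roots (with multiplicity) in the open ball of radius `ε` about
`lam0`. -/
theorem stmt_9 (D : ℕ) (P : Polynomial ℂ) (Q : ℕ → Polynomial ℂ) (hP : P ≠ 0)
    (hdeg : ∀ N, (Q N).natDegree ≤ D)
    (hconv : ∀ z : ℂ, Tendsto (fun N => (Q N).eval z) atTop (𝓝 (P.eval z)))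
    (lam0 : ℂ) (hroot : P.IsRoot lam0) (ε : ℝ) (hε : 0 < ε)
    (hsep : ∀ z : ℂ, P.IsRoot z → z ≠ lam0 → ε < dist lam0 z) :
    ∃ N₀ : ℕ, ∀ N, N₀ ≤ N →
      (Multiset.filter (fun z => dist z lam0 < ε) (Q N).roots).card
        = P.rootMultiplicity lam0 :=
  stmt_9_general D P Q hdeg hconv lam0 ε hε hsep
end

section
/- Let := diag(α₁, …, α_r) ∈ M_r(ℂ), B̂ := diag(β₁, …, β_s) ∈ M_s(ℂ), and Û = (u_{ij}) ∈ M_{r×s}(ℂ). Define X̃ ∈ M_{r+s}(ℂ) as the block matrix with blocks X̃₁₁ = Â, X̃₁₂ = ÂÛ, X̃₂₁ = B̂Û*, X̃₂₂ = B̂. Then the characteristic polynomial of X̃ is det(λ·I_{r+s} − X̃) = ∑_{n=0}^{min{r,s}} (−1)^n ∑_{I ⊆ [r], J ⊆ [s], #I=#J=n} ( ∏_{i ∈ [r]∖I} (λ − α_i) · ∏_{j ∈ [s]∖J} (λ − β_j) · ∏_{i∈I} α_i · ∏_{j∈J} β_j ) · |[Û]_{I,J}|². -/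
/-!
Write `λ - X̃ = diag (λ - α, λ - β) - diag (α, β) * K` with `K = [[0, U], [Uᴴ, 0]]`. Expanding the
determinant multilinearly in the rows gives `det (diag d + M) = ∑_S (∏_{i ∉ S} d i) det M_{S,S}`.
For `S = I ⊔ J`, the principal minor of `diag (α, β) * K` is `±∏_I α ∏_J β` times
`det [[0, U_{I,J}], [Uᴴ_{J,I}, 0]]`, which vanishes unless `#I = #J` and otherwise equals
`(-1)^#I det U_{I,J} * conj (det U_{I,J}) = (-1)^#I |[U]_{I,J}|²`.
-/

open Matrix

/-- The minor `[C]_{I,J}`: the determinant of the submatrix of `C` with rows indexed by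
`I` and columns by `J` (in increasing order), defined to be `0` if `#I ≠ #J`; note
`[C]_{∅,∅} = 1`. -/
noncomputable def minorIJ {m s : ℕ} (C : Matrix (Fin m) (Fin s) ℂ)
    (I : Finset (Fin m)) (J : Finset (Fin s)) : ℂ :=
  if h : I.card = J.card then
    Matrix.det (Matrix.of fun a b : Fin I.card =>
      C (I.orderIsoOfFin rfl a) (J.orderIsoOfFin h.symm b))
  else 0

open Finset

namespace Finset

variable {m n : Type*}

def subtypeSumEquivDisjSum (I : Finset m) (J : Finset n) : I ⊕ J ≃ I.disjSum J where
  toFun := Sum.elim (fun i => ⟨.inl i, by simp⟩) (fun j => ⟨.inr j, by simp⟩)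
  invFun
    | ⟨.inl i, h⟩ => .inl ⟨i, by simpa using h⟩
    | ⟨.inr j, h⟩ => .inr ⟨j, by simpa using h⟩
  left_inv := by rintro (i | j) <;> rfl
  right_inv := by rintro ⟨i | j, h⟩ <;> rfl

theorem compl_disjSum [Fintype m] [Fintype n] [DecidableEq m] [DecidableEq n]
    (I : Finset m) (J : Finset n) : (I.disjSum J)ᶜ = Iᶜ.disjSum Jᶜ := by
  ext (x | x) <;> simp

end Finset

namespace Matrix

theorem fromBlocks_submatrix_sum_map {α l m n o l' m' n' o' : Type*} (A : Matrix n l α)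
    (B : Matrix n m α) (C : Matrix o l α) (D : Matrix o m α) (fn : n' → n) (fo : o' → o)
    (fl : l' → l) (fm : m' → m) :
    (fromBlocks A B C D).submatrix (Sum.map fn fo) (Sum.map fl fm) =
      fromBlocks (A.submatrix fn fl) (B.submatrix fn fm)
        (C.submatrix fo fl) (D.submatrix fo fm) := by
  ext (i | i) (j | j) <;> rfl

variable {R : Type*} [CommRing R] {k m n : Type*} [Fintype k] [Fintype m] [Fintype n]
  [DecidableEq k] [DecidableEq m] [DecidableEq n]

theorem det_diagonal_add (d : n → R) (M : Matrix n n R) :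
    det (diagonal d + M) =
      ∑ S : Finset n, (∏ i ∈ Sᶜ, d i) * det (M.submatrix ((↑) : S → n) (↑)) := by
  rw [add_comm]
  refine ((detRowAlternating (n := n) (R := R)).map_add_univ M (diagonal d)).trans
    (sum_congr rfl fun S _ => ?_)
  let P : n → n → R := S.piecewise M.row (1 : Matrix n n R).row
  have hrows : S.piecewise M (diagonal d) = Sᶜ.piecewise (fun i => d i • P i) P := by
    ext i j
    by_cases hi : i ∈ S <;> simp [P, Finset.piecewise, hi, diagonal, one_apply]
  rw [hrows]
  exact ((detRowAlternating (n := n) (R := R)).toMultilinearMap.map_piecewise_smul d P Sᶜ).trans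
    (congrArg _ (det_piecewise_one_eq_submatrix_det M S))

theorem det_diagonal_elim_add (a : m → R) (b : n → R) (M : Matrix (m ⊕ n) (m ⊕ n) R) :
    det (diagonal (Sum.elim a b) + M) = ∑ I : Finset m, ∑ J : Finset n,
      (∏ i ∈ Iᶜ, a i) * (∏ j ∈ Jᶜ, b j) *
        det (M.submatrix (Sum.map ((↑) : I → m) ((↑) : J → n)) (Sum.map (↑) (↑))) := by
  rw [det_diagonal_add, ← Fintype.sum_prod_type', ← Finset.sumEquiv.symm.sum_comp]
  refine sum_congr rfl fun ⟨I, J⟩ _ => ?_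
  have hsub : (M.submatrix ((↑) : I.disjSum J → m ⊕ n) (↑)).submatrix
      (subtypeSumEquivDisjSum I J) (subtypeSumEquivDisjSum I J) =
        M.submatrix (Sum.map (↑) (↑)) (Sum.map (↑) (↑)) := by
    ext (x | x) (y | y) <;> rfl
  simp only [OrderIso.coe_toEquiv, sumEquiv_symm_apply, compl_disjSum, prod_disjSum, Sum.elim_inl,
    Sum.elim_inr]
  rw [← hsub, det_submatrix_equiv_self]
  rfl

theorem det_submatrix_diagonal_mul (d : n → R) (M : Matrix n n R) (f : k → n) :
    det ((diagonal d * M).submatrix f f) = (∏ i, d (f i)) * det (M.submatrix f f) := by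
  have h : (diagonal d * M).submatrix f f = diagonal (d ∘ f) * M.submatrix f f := by
    ext; simp [diagonal_mul]
  rw [h, det_mul, det_diagonal, Function.comp_def]

theorem det_fromBlocks_zero_one_one_zero :
    det (fromBlocks 0 1 1 0 : Matrix (m ⊕ m) (m ⊕ m) R) = (-1) ^ Fintype.card m := by
  have h : (fromBlocks 1 1 0 1 : Matrix (m ⊕ m) (m ⊕ m) R) * fromBlocks 0 1 1 0 =
      fromBlocks 1 1 1 0 := by
    simp [fromBlocks_multiply]
  have := congrArg det h
  rwa [det_mul, det_fromBlocks_zero₂₁, det_fromBlocks_one₁₁, det_one, one_mul, one_mul,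
    zero_sub, mul_one, det_neg, det_one, mul_one] at this

theorem det_fromBlocks_zero₁₁_zero₂₂ (B C : Matrix m m R) :
    det (fromBlocks 0 B C 0) = (-1) ^ Fintype.card m * (det B * det C) := by
  have h : fromBlocks 0 B C 0 =
      fromBlocks B 0 0 C * (fromBlocks 0 1 1 0 : Matrix (m ⊕ m) (m ⊕ m) R) := by
    simp [fromBlocks_multiply]
  rw [h, det_mul, det_fromBlocks_zero₂₁, det_fromBlocks_zero_one_one_zero, mul_comm]

theorem det_fromBlocks_zero₁₁_zero₂₂_of_equiv (B : Matrix m n R) (C : Matrix n m R) (e₁ : k ≃ m)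
    (e₂ : k ≃ n) : det (fromBlocks 0 B C 0) =
      (-1) ^ Fintype.card k * (det (B.submatrix e₁ e₂) * det (C.submatrix e₂ e₁)) := by
  rw [← det_fromBlocks_zero₁₁_zero₂₂, ← det_submatrix_equiv_self (e₁.sumCongr e₂)]
  congr 1
  ext (i | i) (j | j) <;> rfl

/-- With `D = diag (2, …, 2, 1, …, 1)` we have `D * M * D = 2 • M`, so
`4 ^ card m * det M = 2 ^ (card m + card n) * det M`. -/
theorem det_fromBlocks_zero₁₁_zero₂₂_of_card_ne [IsDomain R] [CharZero R] (B : Matrix m n R)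
    (C : Matrix n m R) (h : Fintype.card m ≠ Fintype.card n) : det (fromBlocks 0 B C 0) = 0 := by
  set D : Matrix (m ⊕ n) (m ⊕ n) R := diagonal (Sum.elim (fun _ => 2) fun _ => 1)
  have hscale : D * fromBlocks 0 B C 0 * D = (2 : R) • fromBlocks 0 B C 0 := by
    ext (i | i) (j | j) <;> simp [D, fromBlocks, mul_comm]
  have hdet := congrArg det hscale
  rw [det_mul, det_mul, det_smul, det_diagonal, Fintype.prod_sum_type, Fintype.card_sum] at hdet
  simp only [Sum.elim_inl, Sum.elim_inr, prod_const, card_univ, one_pow, mul_one] at hdet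
  have hpow : (2 : R) ^ Fintype.card m * 2 ^ Fintype.card m ≠
      2 ^ (Fintype.card m + Fintype.card n) := by
    rw [← pow_add]
    exact_mod_cast (Nat.pow_right_injective le_rfl).ne (by omega)
  by_contra hne
  exact hpow (mul_right_cancel₀ hne (by linear_combination hdet))

end Matrix

theorem Finset.sum_Icc_min_sum_card_eq {m n M : Type*} [Fintype m] [Fintype n]
    [AddCommMonoid M] (F : ℕ → Finset m → Finset n → M) :
    ∑ k ∈ Icc 0 (min (Fintype.card m) (Fintype.card n)),
        ∑ I with #I = k, ∑ J with #J = k, F k I J =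
      ∑ I : Finset m, ∑ J : Finset n, if #I = #J then F #I I J else 0 := by
  simp only [sum_filter]
  rw [sum_comm]
  refine sum_congr rfl fun I _ => ?_
  rw [sum_ite_eq]
  split_ifs with hI
  · exact sum_congr rfl fun J _ => by simp only [eq_comm]
  · refine (sum_eq_zero fun J _ => if_neg fun hIJ => hI ?_).symm
    exact mem_Icc.2 ⟨Nat.zero_le _, le_min (card_le_univ I) (hIJ ▸ card_le_univ J)⟩

theorem det_fromBlocks_submatrix_conjTranspose {r s : ℕ} (U : Matrix (Fin r) (Fin s) ℂ)
    (I : Finset (Fin r)) (J : Finset (Fin s)) :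
    det (fromBlocks 0 (U.submatrix ((↑) : I → Fin r) ((↑) : J → Fin s))
      (Uᴴ.submatrix (↑) (↑)) 0) =
      if #I = #J then (-1) ^ #I * (Complex.normSq (minorIJ U I J) : ℂ) else 0 := by
  split_ifs with h
  · rw [det_fromBlocks_zero₁₁_zero₂₂_of_equiv _ _ (I.orderIsoOfFin rfl).toEquiv
      (J.orderIsoOfFin h.symm).toEquiv, ← conjTranspose_submatrix, ← conjTranspose_submatrix,
      det_conjTranspose, Complex.star_def, Complex.mul_conj, minorIJ, dif_pos h, Fintype.card_fin]
    rfl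
  · exact det_fromBlocks_zero₁₁_zero₂₂_of_card_ne _ _ (by simpa using h)

/-- The characteristic polynomial of the block matrix
`X̃ = [[Â, ÂÛ], [B̂Û*, B̂]]` with `Â = diag α`, `B̂ = diag β`:
`det(λI − X̃) = ∑_{n=0}^{min(r,s)} (−1)^n ∑_{#I=#J=n}
  (∏_{i∉I}(λ−α_i) ∏_{j∉J}(λ−β_j) ∏_{i∈I}α_i ∏_{j∈J}β_j) |[Û]_{I,J}|²`. -/
theorem stmt_12 (r s : ℕ) (α : Fin r → ℂ) (β : Fin s → ℂ)
    (U : Matrix (Fin r) (Fin s) ℂ) (lam : ℂ) :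
    Matrix.det (lam • (1 : Matrix (Fin r ⊕ Fin s) (Fin r ⊕ Fin s) ℂ)
        - Matrix.fromBlocks (Matrix.diagonal α) (Matrix.diagonal α * U)
            (Matrix.diagonal β * Uᴴ) (Matrix.diagonal β))
      = ∑ n ∈ Finset.Icc 0 (min r s), (-1 : ℂ) ^ n *
          ∑ I ∈ Finset.univ.filter (fun I : Finset (Fin r) => I.card = n),
            ∑ J ∈ Finset.univ.filter (fun J : Finset (Fin s) => J.card = n),
              ((∏ i ∈ Iᶜ, (lam - α i)) * (∏ j ∈ Jᶜ, (lam - β j)) *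
                (∏ i ∈ I, α i) * (∏ j ∈ J, β j)) *
                (Complex.normSq (minorIJ U I J) : ℂ) := by
  have hsplit : lam • (1 : Matrix (Fin r ⊕ Fin s) (Fin r ⊕ Fin s) ℂ)
        - fromBlocks (diagonal α) (diagonal α * U) (diagonal β * Uᴴ) (diagonal β) =
      diagonal (Sum.elim (fun i => lam - α i) fun j => lam - β j) +
        -(diagonal (Sum.elim α β) * fromBlocks 0 U Uᴴ 0) := by
    ext (i | i) (j | j) <;> simp [one_apply, diagonal_apply] <;> split_ifs <;> ring
  simp only [mul_sum]
  rw [hsplit, det_diagonal_elim_add,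
    show min r s = min (Fintype.card (Fin r)) (Fintype.card (Fin s)) by simp,
    sum_Icc_min_sum_card_eq]
  refine sum_congr rfl fun I _ => sum_congr rfl fun J _ => ?_
  rw [submatrix_neg, Pi.neg_apply, Pi.neg_apply, det_neg, det_submatrix_diagonal_mul,
    fromBlocks_submatrix_sum_map]
  simp only [submatrix_zero, Pi.zero_apply, det_fromBlocks_submatrix_conjTranspose,
    Fintype.card_sum, Fintype.card_coe, Fintype.prod_sum_type, Sum.map_inl, Sum.map_inr,
    Sum.elim_inl, Sum.elim_inr, prod_coe_sort]
  split_ifs with h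
  · rw [h, ← two_mul, pow_mul]; ring
  · simp
end
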